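/- arXiv:2605.02526 — 4 statements merged into one kernel-verified Lean document; each statement's English description precedes it below -/
import Mathlib

section
/- Let X ⊆ ℝⁿ, let X_I ⊆ X be the initial set and X_U ⊆ X the unsafe set, let f : ℝⁿ → ℝⁿ be a vector field, and let B : ℝⁿ → ℝ be differentiable. Assume (i) B(x) > 0 for all x ∈ X_U, (ii) B(x) ≤ 0 for all x ∈ X_I, and (iii) for all x ∈ X with B(x) = 0, the Lie derivative satisfies L_f B(x) < 0. Then the system ẋ = f(x) is safe: for every T ≥ 0 and every trajectory x : [0,T] → ℝⁿ of ẋ = f(x) with x(t) ∈ X for all t ∈ [0,T] and x(0) ∈ X_I, we have x(t) ∉ X_U for all t ∈ [0,T]. -/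
open Set

theorem HasGradientAt.hasDerivAt_comp {F : Type*} [NormedAddCommGroup F] [InnerProductSpace ℝ F]
    [CompleteSpace F] {B : F → ℝ} {B' : F} {x : ℝ → F} {x' : F} {t : ℝ}
    (hB : HasGradientAt B B' (x t)) (hx : HasDerivAt x x' t) :
    HasDerivAt (B ∘ x) (inner ℝ B' x') t :=
  hB.hasFDerivAt.comp_hasDerivAt t hx

theorem nonpos_of_hasDerivAt_neg_of_eq_zero {g g' : ℝ → ℝ} {a b : ℝ}
    (hg : ∀ t ∈ Icc a b, HasDerivAt g (g' t) t) (ha : g a ≤ 0)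
    (hzero : ∀ t ∈ Ico a b, g t = 0 → g' t < 0) : ∀ t ∈ Icc a b, g t ≤ 0 := fun _ ht =>
  image_le_of_deriv_right_lt_deriv_boundary' (B := 0) (B' := 0)
    (fun t ht => (hg t ht).continuousAt.continuousWithinAt)
    (fun t ht => (hg t (Ico_subset_Icc_self ht)).hasDerivWithinAt) ha continuousOn_const
    (fun _ _ => hasDerivWithinAt_const _ _ 0) hzero ht

theorem barrier_certificate_safety_general {n : ℕ}
    (X XI XU : Set (EuclideanSpace ℝ (Fin n)))
    (f : EuclideanSpace ℝ (Fin n) → EuclideanSpace ℝ (Fin n))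
    (B : EuclideanSpace ℝ (Fin n) → ℝ) (hB : Differentiable ℝ B)
    (hU : ∀ x ∈ XU, B x > 0)
    (hI : ∀ x ∈ XI, B x ≤ 0)
    (hL : ∀ x ∈ X, B x = 0 → (inner ℝ (gradient B x) (f x) : ℝ) < 0) :
    ∀ (T : ℝ), 0 ≤ T → ∀ x : ℝ → EuclideanSpace ℝ (Fin n),
      (∀ t ∈ Icc 0 T, HasDerivAt x (f (x t)) t) →
      (∀ t ∈ Icc 0 T, x t ∈ X) →
      x 0 ∈ XI →
      ∀ t ∈ Icc 0 T, x t ∉ XU := by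
  intro T _ x hx hxX hx0 t ht hxU
  have hBx : ∀ s ∈ Icc 0 T, B (x s) ≤ 0 :=
    nonpos_of_hasDerivAt_neg_of_eq_zero (g := B ∘ x)
      (fun s hs => (hB (x s)).hasGradientAt.hasDerivAt_comp (hx s hs)) (hI _ hx0)
      (fun s hs => hL _ (hxX s (Ico_subset_Icc_self hs)))
  exact (hU _ hxU).not_ge (hBx t ht)

/-- **Barrier certificate theorem.**
If `B` is differentiable, positive on the unsafe set `XU`, non-positive on the
initial set `XI`, and its Lie derivative `⟪∇B(x), f(x)⟫` is negative on the
zero-level set of `B` within the state space `X`, then no trajectory of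
`ẋ = f(x)` that stays in `X` and starts in `XI` ever reaches `XU`. -/
theorem barrier_certificate_safety {n : ℕ}
    (X XI XU : Set (EuclideanSpace ℝ (Fin n)))
    (hXI : XI ⊆ X) (hXU : XU ⊆ X)
    (f : EuclideanSpace ℝ (Fin n) → EuclideanSpace ℝ (Fin n))
    (B : EuclideanSpace ℝ (Fin n) → ℝ) (hB : Differentiable ℝ B)
    (hU : ∀ x ∈ XU, B x > 0)
    (hI : ∀ x ∈ XI, B x ≤ 0)
    (hL : ∀ x ∈ X, B x = 0 → (inner ℝ (gradient B x) (f x) : ℝ) < 0) :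
    ∀ (T : ℝ), 0 ≤ T → ∀ x : ℝ → EuclideanSpace ℝ (Fin n),
      (∀ t ∈ Icc 0 T, HasDerivAt x (f (x t)) t) →
      (∀ t ∈ Icc 0 T, x t ∈ X) →
      x 0 ∈ XI →
      ∀ t ∈ Icc 0 T, x t ∉ XU :=
  barrier_certificate_safety_general X XI XU f B hB hU hI hL
end

section
/- Let T > 0 and let g : [0,T] → ℝ be differentiable. If g(0) ≤ 0 and for every t ∈ [0,T] with g(t) = 0 the derivative satisfies g'(t) < 0, then g(t) ≤ 0 for all t ∈ [0,T]. -/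
open Set

theorem nonpos_of_deriv_neg_on_zero_level_general (T : ℝ)
    (g g' : ℝ → ℝ)
    (hg : ∀ t ∈ Icc 0 T, HasDerivAt g (g' t) t)
    (h0 : g 0 ≤ 0)
    (hzero : ∀ t ∈ Icc 0 T, g t = 0 → g' t < 0) :
    ∀ t ∈ Icc 0 T, g t ≤ 0 := by
  have hcont : ContinuousOn g (Icc 0 T) := fun t ht =>
    (hg t ht).continuousAt.continuousWithinAt
  -- Fencing `g` by the constant barrier `0`, whose derivative `0` exceeds `g'` wherever `g` touches it.
  exact fun t ht => image_le_of_deriv_right_lt_deriv_boundary' hcont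
    (fun x hx => (hg x (Ico_subset_Icc_self hx)).hasDerivWithinAt) h0 continuousOn_const
    (fun _ _ => hasDerivWithinAt_const _ _ 0)
    (fun x hx => hzero x (Ico_subset_Icc_self hx)) ht

/-- **Scalar invariance lemma.** If `g` is differentiable on `[0, T]` with
derivative `g'`, `g 0 ≤ 0`, and `g' t < 0` whenever `g t = 0` for `t ∈ [0, T]`,
then `g t ≤ 0` on all of `[0, T]`. -/
theorem nonpos_of_deriv_neg_on_zero_level (T : ℝ) (hT : 0 < T)
    (g g' : ℝ → ℝ)
    (hg : ∀ t ∈ Icc 0 T, HasDerivAt g (g' t) t)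
    (h0 : g 0 ≤ 0)
    (hzero : ∀ t ∈ Icc 0 T, g t = 0 → g' t < 0) :
    ∀ t ∈ Icc 0 T, g t ≤ 0 :=
  nonpos_of_deriv_neg_on_zero_level_general T g g' hg h0 hzero
end

section
/- Let Z₁ = {c₁ + G₁β : β ∈ [-1,1]^{q₁}} ⊆ ℝⁿ and Z₂ = {c₂ + G₂γ : γ ∈ [-1,1]^{q₂}} ⊆ ℝⁿ be zonotopes with centers c₁, c₂ ∈ ℝⁿ and generator matrices G₁ ∈ ℝ^{n×q₁}, G₂ ∈ ℝ^{n×q₂}. Then for all β ∈ [-1,1]^{q₁} and γ ∈ [-1,1]^{q₂}, the inner product (c₁ + G₁β)ᵀ(c₂ + G₂γ) can be written as c' + Σⱼ g'ⱼ δⱼ for some δ with all entries in [-1,1], where c' = c₁ᵀc₂ and the list of scalar generators g' consists of the entries of c₁ᵀG₂ (a row of length q₂), the entries of G₁ᵀc₂ (a vector of length q₁), and, for each i ∈ {1,…,q₁} and j ∈ {1,…,q₂}, the entry (G₁ᵀG₂)_{(i,j)}. Consequently, the set of inner products {x₁ᵀx₂ : x₁ ∈ Z₁, x₂ ∈ Z₂}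 is contained in the one-dimensional zonotope with center c' and these q₂ + q₁ + q₁·q₂ generators. -/
/-!
Expanding bilinearly, `(c₁ + G₁β)ᵀ(c₂ + G₂γ) = c₁ᵀc₂ + (c₁ᵀG₂)γ + (G₁ᵀc₂)ᵀβ + Σᵢⱼ (G₁ᵀG₂)ᵢⱼ βᵢγⱼ`.
A product of two numbers in `[-1,1]` lies in `[-1,1]`, so `δ = (γ, β, (βᵢγⱼ)ᵢⱼ)` is admissible.
-/

open Set

/-- The zonotope with center `c ∈ ℝⁿ` and generator matrix `G ∈ ℝ^{n×q}`:
the set `{c + Gβ : β ∈ [-1,1]^q}`. -/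
def zonotope {n q : ℕ} (c : Fin n → ℝ) (G : Matrix (Fin n) (Fin q) ℝ) :
    Set (Fin n → ℝ) :=
  {x | ∃ β : Fin q → ℝ, (∀ i, β i ∈ Icc (-1 : ℝ) 1) ∧ x = c + G.mulVec β}

/-- The scalar generators of the zonotope enclosure of the inner product of two
zonotopes `Z(c₁, G₁)` and `Z(c₂, G₂)`: the entries of the row `c₁ᵀG₂`
(length `q₂`), the entries of the vector `G₁ᵀc₂` (length `q₁`), and the entries
`(G₁ᵀG₂)_{(i,j)}` for `i ∈ [q₁]`, `j ∈ [q₂]`. -/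
def innerProdGenerators {n q₁ q₂ : ℕ} (c₁ c₂ : Fin n → ℝ)
    (G₁ : Matrix (Fin n) (Fin q₁) ℝ) (G₂ : Matrix (Fin n) (Fin q₂) ℝ) :
    (Fin q₂ ⊕ Fin q₁ ⊕ Fin q₁ × Fin q₂) → ℝ :=
  Sum.elim (fun j => Matrix.vecMul c₁ G₂ j)
    (Sum.elim (fun i => Matrix.mulVec G₁.transpose c₂ i)
      (fun p => (G₁.transpose * G₂) p.1 p.2))

open Matrix

theorem mul_mem_Icc_neg_one_one {α : Type*} [Ring α] [LinearOrder α] [IsStrictOrderedRing α]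
    {a b : α} (ha : a ∈ Icc (-1 : α) 1) (hb : b ∈ Icc (-1 : α) 1) : a * b ∈ Icc (-1 : α) 1 := by
  rw [mem_Icc, ← abs_le] at *
  rw [abs_mul]
  exact mul_le_one₀ ha (abs_nonneg b) hb

section DotProduct

variable {R m n p : Type*} [CommSemiring R] [Fintype m] [Fintype n] [Fintype p]

theorem mulVec_dotProduct (A : Matrix m n R) (x : n → R) (v : m → R) :
    A *ᵥ x ⬝ᵥ v = Aᵀ *ᵥ v ⬝ᵥ x := by
  rw [dotProduct_comm, dotProduct_mulVec, mulVec_transpose]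

theorem mulVec_dotProduct_mulVec (A : Matrix m n R) (B : Matrix m p R) (x : n → R) (y : p → R) :
    A *ᵥ x ⬝ᵥ B *ᵥ y = x ⬝ᵥ (Aᵀ * B) *ᵥ y := by
  rw [dotProduct_mulVec, ← vecMul_transpose, vecMul_vecMul, ← dotProduct_mulVec]

theorem dotProduct_mulVec_eq_sum_sum (x : n → R) (M : Matrix n p R) (y : p → R) :
    x ⬝ᵥ M *ᵥ y = ∑ i, ∑ j, M i j * (x i * y j) := by
  simp only [dotProduct, mulVec, Finset.mul_sum]
  exact Finset.sum_congr rfl fun i _ => Finset.sum_congr rfl fun j _ => by ring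

end DotProduct

def innerProdFactors {R ι κ : Type*} [Mul R] (β : ι → R) (γ : κ → R) : κ ⊕ ι ⊕ ι × κ → R :=
  Sum.elim γ (Sum.elim β fun p => β p.1 * γ p.2)

theorem innerProdFactors_mem_Icc {R ι κ : Type*} [Ring R] [LinearOrder R] [IsStrictOrderedRing R]
    {β : ι → R} {γ : κ → R} (hβ : ∀ i, β i ∈ Icc (-1 : R) 1) (hγ : ∀ j, γ j ∈ Icc (-1 : R) 1) :
    ∀ k, innerProdFactors β γ k ∈ Icc (-1 : R) 1
  | .inl j => hγ j
  | .inr (.inl i) => hβ i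
  | .inr (.inr p) => mul_mem_Icc_neg_one_one (hβ p.1) (hγ p.2)

theorem dotProduct_add_mulVec_eq_sum_innerProdGenerators {n q₁ q₂ : ℕ} (c₁ c₂ : Fin n → ℝ)
    (G₁ : Matrix (Fin n) (Fin q₁) ℝ) (G₂ : Matrix (Fin n) (Fin q₂) ℝ)
    (β : Fin q₁ → ℝ) (γ : Fin q₂ → ℝ) :
    (c₁ + G₁ *ᵥ β) ⬝ᵥ (c₂ + G₂ *ᵥ γ)
      = c₁ ⬝ᵥ c₂ + ∑ k, innerProdGenerators c₁ c₂ G₁ G₂ k * innerProdFactors β γ k := by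
  rw [add_dotProduct, dotProduct_add, dotProduct_add, dotProduct_mulVec c₁,
    mulVec_dotProduct G₁ β c₂, mulVec_dotProduct_mulVec, dotProduct_mulVec_eq_sum_sum]
  simp only [innerProdGenerators, innerProdFactors, Fintype.sum_sum_type, Fintype.sum_prod_type,
    Sum.elim_inl, Sum.elim_inr, dotProduct]
  ring

/-- **Enclosure of the inner product of two zonotopes.** Every inner product
`(c₁ + G₁β)ᵀ(c₂ + G₂γ)` with factors `β, γ ∈ [-1,1]` can be written as
`c₁ᵀc₂ + ∑ⱼ g'ⱼ δⱼ` with `δ ∈ [-1,1]`, where the `g'ⱼ` are the generators of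
`innerProdGenerators`; consequently the set of inner products of points of the
two zonotopes is contained in the corresponding one-dimensional zonotope with
center `c₁ᵀc₂`. -/
theorem zonotope_inner_product_enclosure {n q₁ q₂ : ℕ}
    (c₁ c₂ : Fin n → ℝ)
    (G₁ : Matrix (Fin n) (Fin q₁) ℝ) (G₂ : Matrix (Fin n) (Fin q₂) ℝ) :
    (∀ β : Fin q₁ → ℝ, ∀ γ : Fin q₂ → ℝ,
      (∀ i, β i ∈ Icc (-1 : ℝ) 1) → (∀ i, γ i ∈ Icc (-1 : ℝ) 1) →
      ∃ δ : (Fin q₂ ⊕ Fin q₁ ⊕ Fin q₁ × Fin q₂) → ℝ,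
        (∀ j, δ j ∈ Icc (-1 : ℝ) 1) ∧
        dotProduct (c₁ + G₁.mulVec β) (c₂ + G₂.mulVec γ)
          = dotProduct c₁ c₂
            + ∑ j, innerProdGenerators c₁ c₂ G₁ G₂ j * δ j)
    ∧ {r | ∃ x₁ ∈ zonotope c₁ G₁, ∃ x₂ ∈ zonotope c₂ G₂,
          r = dotProduct x₁ x₂}
        ⊆ {r | ∃ δ : (Fin q₂ ⊕ Fin q₁ ⊕ Fin q₁ × Fin q₂) → ℝ,
            (∀ j, δ j ∈ Icc (-1 : ℝ) 1) ∧
            r = dotProduct c₁ c₂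
              + ∑ j, innerProdGenerators c₁ c₂ G₁ G₂ j * δ j} := by
  have enclosure : ∀ β : Fin q₁ → ℝ, ∀ γ : Fin q₂ → ℝ,
      (∀ i, β i ∈ Icc (-1 : ℝ) 1) → (∀ i, γ i ∈ Icc (-1 : ℝ) 1) →
      ∃ δ : (Fin q₂ ⊕ Fin q₁ ⊕ Fin q₁ × Fin q₂) → ℝ,
        (∀ j, δ j ∈ Icc (-1 : ℝ) 1) ∧
        (c₁ + G₁ *ᵥ β) ⬝ᵥ (c₂ + G₂ *ᵥ γ) = c₁ ⬝ᵥ c₂ + ∑ j, innerProdGenerators c₁ c₂ G₁ G₂ j * δ j :=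
    fun β γ hβ hγ => ⟨innerProdFactors β γ, innerProdFactors_mem_Icc hβ hγ,
      dotProduct_add_mulVec_eq_sum_innerProdGenerators c₁ c₂ G₁ G₂ β γ⟩
  refine ⟨enclosure, ?_⟩
  rintro r ⟨x₁, ⟨β, hβ, rfl⟩, x₂, ⟨γ, hγ, rfl⟩, rfl⟩
  exact enclosure β γ hβ hγ
end

section
/- Let B : ℝⁿ → ℝ, let Z_x = {c_x + G_x β : β ∈ [-1,1]^{q₀}} ⊆ ℝⁿ be a zonotope with center c_x ∈ ℝⁿ and generator matrix G_x ∈ ℝ^{n×q₀}, and suppose the output of B over Z_x admits a shared-factor enclosure: there exist c_y ∈ ℝ, a row vector G_{y,1} ∈ ℝ^{1×q₀}, and a row vector G_{y,2} ∈ ℝ^{1×r} such that for every β ∈ [-1,1]^{q₀} there exists γ ∈ [-1,1]^{r} with B(c_x + G_x β) = c_y + G_{y,1}β + G_{y,2}γ. Then every zero of B in Z_x lies in the constrained zonotope obtained by restricting the factors: {x ∈ Z_x : B(x) = 0} ⊆ {c_x + G_x β : β ∈ [-1,1]^{q₀}, −G_{y,1}β ≤ c_y + Σⱼ|G_{y,2(1,j)}|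 and G_{y,1}β ≤ −c_y + Σⱼ|G_{y,2(1,j)}|}. -/
open Set

theorem abs_dotProduct_le_sum_abs_of_mem_Icc {ι : Type*} [Fintype ι] (g γ : ι → ℝ)
    (hγ : ∀ j, γ j ∈ Icc (-1 : ℝ) 1) : |dotProduct g γ| ≤ ∑ j, |g j| :=
  calc |dotProduct g γ| ≤ ∑ j, |g j * γ j| := Finset.abs_sum_le_sum_abs _ _
    _ ≤ ∑ j, |g j| := Finset.sum_le_sum fun j _ => by
      rw [abs_mul]
      exact mul_le_of_le_one_right (abs_nonneg _) (abs_le.mpr (hγ j))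

/-- **Enclosing the zero-level set by a constrained zonotope.** If the output
of `B` over the zonotope `Z(c_x, G_x)` admits a shared-factor enclosure with
output center `c_y`, shared generators `g₁` (a row of length `q₀`) and fresh
generators `g₂` (a row of length `r`), then every zero of `B` in `Z(c_x, G_x)`
lies in the constrained zonotope obtained by constraining the shared factors
`β` with `−g₁β ≤ c_y + ∑ⱼ|g₂ⱼ|` and `g₁β ≤ −c_y + ∑ⱼ|g₂ⱼ|`. -/
theorem zero_level_set_constrained_zonotope_enclosure {n q₀ r : ℕ}
    (B : (Fin n → ℝ) → ℝ)
    (cx : Fin n → ℝ) (Gx : Matrix (Fin n) (Fin q₀) ℝ)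
    (cy : ℝ) (g₁ : Fin q₀ → ℝ) (g₂ : Fin r → ℝ)
    (hshared : ∀ β : Fin q₀ → ℝ, (∀ i, β i ∈ Icc (-1 : ℝ) 1) →
      ∃ γ : Fin r → ℝ, (∀ j, γ j ∈ Icc (-1 : ℝ) 1) ∧
        B (cx + Gx.mulVec β)
          = cy + dotProduct g₁ β + dotProduct g₂ γ) :
    {x ∈ zonotope cx Gx | B x = 0}
      ⊆ {x | ∃ β : Fin q₀ → ℝ, (∀ i, β i ∈ Icc (-1 : ℝ) 1) ∧
          -dotProduct g₁ β ≤ cy + ∑ j, |g₂ j| ∧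
          dotProduct g₁ β ≤ -cy + ∑ j, |g₂ j| ∧
          x = cx + Gx.mulVec β} := by
  rintro x ⟨⟨β, hβ, rfl⟩, hzero⟩
  obtain ⟨γ, hγ, hB⟩ := hshared β hβ
  obtain ⟨hlower, hupper⟩ := abs_le.mp (abs_dotProduct_le_sum_abs_of_mem_Icc g₂ γ hγ)
  exact ⟨β, hβ, by linarith, by linarith, rfl⟩
end
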